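/- Let (S, 𝒜, μ) be a measure space, F a real Banach space, and v : S → F Bochner integrable with ∫ v dμ ≠ 0. Let g : ℕ → S → ℝ be measurable functions with gₙ(s) → −∞ as n → ∞ for μ-almost every s, and let σ(t) = (1 + exp(−t))⁻¹ denote the logistic function. Then ∫ σ(−gₙ(s)) • v(s) dμ(s) → ∫ v dμ as n → ∞; in particular the limit is nonzero, so the DPO influence term, whose weight on a flipped data point is σ(−g_θ(s_flip)), does not vanish in the worst-case limit g_θ(s_flip) → −∞: DPO does not satisfy the redescending property. -/

import Mathlib

open Filter Topology MeasureTheory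

noncomputable def logistic (t : ℝ) : ℝ := (1 + Real.exp (-t))⁻¹

/-! Since `logistic t → 1` as `t → ∞` and `0 ≤ logistic ≤ 1`, the weights `logistic (-gₙ)` tend
to `1` almost everywhere while `‖logistic (-gₙ) • v‖ ≤ ‖v‖`, so dominated convergence applies. -/

theorem logistic_pos (t : ℝ) : 0 < logistic t := by
  unfold logistic
  positivity

theorem logistic_le_one (t : ℝ) : logistic t ≤ 1 :=
  inv_le_one_of_one_le₀ (le_add_of_nonneg_right (Real.exp_nonneg _))

theorem abs_logistic_le_one (t : ℝ) : |logistic t| ≤ 1 := by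
  rw [abs_of_pos (logistic_pos t)]
  exact logistic_le_one t

theorem continuous_logistic : Continuous logistic :=
  (continuous_const.add (Real.continuous_exp.comp continuous_neg)).inv₀
    fun _ => (add_pos one_pos (Real.exp_pos _)).ne'

theorem tendsto_logistic_atTop : Tendsto logistic atTop (𝓝 1) := by
  have hexp : Tendsto (fun t => Real.exp (-t)) atTop (𝓝 0) :=
    Real.tendsto_exp_atBot.comp tendsto_neg_atTop_atBot
  unfold logistic
  simpa only [add_zero, inv_one] using (hexp.const_add 1).inv₀ (by norm_num)

theorem tendsto_integral_smul_of_abs_le_one {S : Type*} [MeasurableSpace S] {μ : Measure S}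
    {F : Type*} [NormedAddCommGroup F] [NormedSpace ℝ F]
    {v : S → F} (hv : Integrable v μ) {w : ℕ → S → ℝ} {w₀ : S → ℝ}
    (hw : ∀ n, AEStronglyMeasurable (w n) μ) (hw_le : ∀ n, ∀ᵐ s ∂μ, |w n s| ≤ 1)
    (hw_lim : ∀ᵐ s ∂μ, Tendsto (fun n => w n s) atTop (𝓝 (w₀ s))) :
    Tendsto (fun n => ∫ s, w n s • v s ∂μ) atTop (𝓝 (∫ s, w₀ s • v s ∂μ)) := by
  refine tendsto_integral_of_dominated_convergence (fun s => ‖v s‖)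
    (fun n => (hw n).smul hv.aestronglyMeasurable) hv.norm (fun n => ?_) ?_
  · filter_upwards [hw_le n] with s hs
    rw [norm_smul, Real.norm_eq_abs]
    exact mul_le_of_le_one_left (norm_nonneg _) hs
  · filter_upwards [hw_lim] with s hs
    exact hs.smul_const (v s)

theorem stmt5_general
    {S : Type*} [MeasurableSpace S] (μ : Measure S)
    {F : Type*} [NormedAddCommGroup F] [NormedSpace ℝ F]
    (v : S → F) (hv : Integrable v μ) (hv0 : (∫ s, v s ∂μ) ≠ 0)
    (g : ℕ → S → ℝ) (hg : ∀ n, Measurable (g n))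
    (hgt : ∀ᵐ s ∂μ, Tendsto (fun n => g n s) atTop atBot) :
    Tendsto (fun n => ∫ s, logistic (-(g n s)) • v s ∂μ) atTop (𝓝 (∫ s, v s ∂μ)) ∧
      (∫ s, v s ∂μ) ≠ 0 := by
  refine ⟨?_, hv0⟩
  have hlim : ∀ᵐ s ∂μ, Tendsto (fun n => logistic (-(g n s))) atTop (𝓝 1) := by
    filter_upwards [hgt] with s hs
    exact tendsto_logistic_atTop.comp (tendsto_neg_atBot_atTop.comp hs)
  simpa only [one_smul] using tendsto_integral_smul_of_abs_le_one hv
    (w := fun n s => logistic (-(g n s)))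
    (fun n => (continuous_logistic.measurable.comp (hg n).neg).aestronglyMeasurable)
    (fun n => ae_of_all μ fun s => abs_logistic_le_one _) hlim

theorem stmt5
    {S : Type*} [MeasurableSpace S] (μ : Measure S)
    {F : Type*} [NormedAddCommGroup F] [NormedSpace ℝ F] [CompleteSpace F]
    (v : S → F) (hv : Integrable v μ) (hv0 : (∫ s, v s ∂μ) ≠ 0)
    (g : ℕ → S → ℝ) (hg : ∀ n, Measurable (g n))
    (hgt : ∀ᵐ s ∂μ, Tendsto (fun n => g n s) atTop atBot) :
    Tendsto (fun n => ∫ s, logistic (-(g n s)) • v s ∂μ) atTop (𝓝 (∫ s, v s ∂μ)) ∧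
      (∫ s, v s ∂μ) ≠ 0 :=
  stmt5_general μ v hv hv0 g hg hgt
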